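/- The dual norm of the subspace norm ‖·‖ₛ associated with matrices S⁽¹⁾,…,S⁽ᴷ⁾ is given by ‖Y‖ₛ* = max over k = 1,…,K of the spectral norm ‖Y₍ₖ₎S⁽ᵏ⁾‖, for any tensor Y; i.e., sup over {M⁽ᵏ⁾} with Σₖ‖M⁽ᵏ⁾‖* ≤ 1 of ⟨Y, Σₖ foldₖ(M⁽ᵏ⁾(S⁽ᵏ⁾)ᵀ)⟩ equals maxₖ ‖Y₍ₖ₎S⁽ᵏ⁾‖. -/

import Mathlib

open Matrix

noncomputable def specNorm {m n : Type*} [Fintype m] [Fintype n] [DecidableEq n]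
    (A : Matrix m n ℝ) : ℝ :=
  ‖LinearMap.toContinuousLinearMap (Matrix.toEuclideanLin A)‖

noncomputable def nuclearNorm {m n : Type*} [Fintype m] [Fintype n] (A : Matrix m n ℝ) : ℝ :=
  sInf { s | ∃ (R : ℕ) (a : Fin R → m → ℝ) (b : Fin R → n → ℝ),
    A = ∑ r, Matrix.of (fun i j => a r i * b r j) ∧
    s = ∑ r, Real.sqrt (∑ i, a r i ^ 2) * Real.sqrt (∑ j, b r j ^ 2) }

/-- Mode-k unfolding of a K-th order tensor of size n×⋯×n. -/
def unfold {K n : ℕ} (k : Fin K) (X : (Fin K → Fin n) → ℝ) :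
    Matrix (Fin n) ({l : Fin K // l ≠ k} → Fin n) ℝ :=
  fun i f => X (fun l => if h : l = k then i else f ⟨l, h⟩)

/-- Mode-k folding, the inverse of the mode-k unfolding. -/
def fold {K n : ℕ} (k : Fin K) (M : Matrix (Fin n) ({l : Fin K // l ≠ k} → Fin n) ℝ) :
    (Fin K → Fin n) → ℝ :=
  fun idx => M (idx k) (fun l => idx l.1)


/-! Moving the foldings onto `Y` turns the pairing into `∑ₖ ⟨Y₍ₖ₎ S⁽ᵏ⁾, M⁽ᵏ⁾⟩`, so everything
reduces to the duality of the nuclear and spectral norms for a single matrix `A`. On a rank-one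
term `a bᵀ` the pairing is `⟨a, A b⟩ ≤ ‖A‖ ‖a‖ ‖b‖`; summing over a decomposition and taking the
infimum gives `⟨A, M⟩ ≤ ‖A‖ ‖M‖_*`, and the rank-one matrices `y xᵀ / (‖y‖ ‖x‖)` with `y = A x`
show that `‖A‖` is the least upper bound. For the family, the budget `∑ₖ ‖M⁽ᵏ⁾‖_* ≤ 1` is best
spent on a single block, which yields the maximum over `k`. -/

open scoped RealInnerProductSpace

section FrobeniusInner

variable {m n p q : Type*} [Fintype m] [Fintype n]

def frobeniusInner (A M : Matrix m n ℝ) : ℝ := (Aᵀ * M).trace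

lemma frobeniusInner_zero (A : Matrix m n ℝ) : frobeniusInner A 0 = 0 := by
  simp [frobeniusInner]

lemma frobeniusInner_sum {ι : Type*} (A : Matrix m n ℝ) (s : Finset ι) (M : ι → Matrix m n ℝ) :
    frobeniusInner A (∑ r ∈ s, M r) = ∑ r ∈ s, frobeniusInner A (M r) := by
  simp only [frobeniusInner, Matrix.mul_sum, Matrix.trace_sum]

lemma frobeniusInner_mul_transpose [Fintype p] [Fintype q] (U : Matrix m p ℝ)
    (S : Matrix p q ℝ) (N : Matrix m q ℝ) :
    frobeniusInner U (N * Sᵀ) = frobeniusInner (U * S) N := by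
  rw [frobeniusInner, frobeniusInner, ← Matrix.mul_assoc, Matrix.trace_mul_comm,
    Matrix.transpose_mul, Matrix.mul_assoc]

variable [DecidableEq n]

lemma frobeniusInner_vecMulVec (A : Matrix m n ℝ) (a : EuclideanSpace ℝ m)
    (b : EuclideanSpace ℝ n) :
    frobeniusInner A (vecMulVec (WithLp.ofLp a) (WithLp.ofLp b)) = ⟪a, toEuclideanLin A b⟫ := by
  rw [frobeniusInner, Matrix.mul_vecMulVec, Matrix.trace_vecMulVec,
    EuclideanSpace.inner_eq_star_dotProduct]
  simp [Matrix.toEuclideanLin, Matrix.dotProduct_mulVec, Matrix.vecMul_transpose, dotProduct_comm]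

lemma specNorm_nonneg (A : Matrix m n ℝ) : 0 ≤ specNorm A := norm_nonneg _

lemma frobeniusInner_vecMulVec_le (A : Matrix m n ℝ) (a : EuclideanSpace ℝ m)
    (b : EuclideanSpace ℝ n) :
    frobeniusInner A (vecMulVec (WithLp.ofLp a) (WithLp.ofLp b)) ≤ specNorm A * (‖a‖ * ‖b‖) := by
  rw [frobeniusInner_vecMulVec]
  calc ⟪a, toEuclideanLin A b⟫
      ≤ ‖a‖ * ‖toEuclideanLin A b‖ := real_inner_le_norm _ _
    _ ≤ ‖a‖ * (specNorm A * ‖b‖) :=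
        mul_le_mul_of_nonneg_left ((toEuclideanLin A).toContinuousLinearMap.le_opNorm b)
          (norm_nonneg a)
    _ = specNorm A * (‖a‖ * ‖b‖) := by ring

end FrobeniusInner

lemma Matrix.exists_eq_sum_vecMulVec {m n α : Type*} [Fintype m] [NonAssocSemiring α]
    (M : Matrix m n α) :
    ∃ (R : ℕ) (a : Fin R → m → α) (b : Fin R → n → α), M = ∑ r, vecMulVec (a r) (b r) := by
  classical
  let e := Fintype.equivFin m
  refine ⟨Fintype.card m, fun r => Pi.single (e.symm r) 1, fun r => M (e.symm r), ?_⟩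
  rw [e.symm.sum_comp (fun i => vecMulVec (Pi.single i 1) (M i))]
  ext i j
  simp [Matrix.sum_apply, vecMulVec_apply, Pi.single_apply]

section NuclearNorm

variable {m n : Type*} [Fintype m] [Fintype n]

lemma norm_toLp_eq_sqrt (a : m → ℝ) : ‖WithLp.toLp 2 a‖ = √(∑ i, a i ^ 2) := by
  simp [EuclideanSpace.norm_eq]

lemma nuclearNorm_nonneg (M : Matrix m n ℝ) : 0 ≤ nuclearNorm M := by
  obtain ⟨R, a, b, hM⟩ := M.exists_eq_sum_vecMulVec
  refine le_csInf ⟨_, R, a, b, hM, rfl⟩ ?_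
  rintro _ ⟨R, a, b, -, rfl⟩
  positivity

lemma nuclearNorm_le_sum_norm_mul_norm {R : ℕ} (a : Fin R → EuclideanSpace ℝ m)
    (b : Fin R → EuclideanSpace ℝ n) :
    nuclearNorm (∑ r, vecMulVec (WithLp.ofLp (a r)) (WithLp.ofLp (b r))) ≤
      ∑ r, ‖a r‖ * ‖b r‖ := by
  refine csInf_le ⟨0, ?_⟩ ⟨R, fun r => WithLp.ofLp (a r), fun r => WithLp.ofLp (b r), rfl, ?_⟩
  · rintro _ ⟨R, a, b, -, rfl⟩
    positivity
  · simp [EuclideanSpace.norm_eq]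

lemma nuclearNorm_zero : nuclearNorm (0 : Matrix m n ℝ) = 0 := by
  refine le_antisymm ?_ (nuclearNorm_nonneg 0)
  simpa using nuclearNorm_le_sum_norm_mul_norm (m := m) (n := n) (R := 0) Fin.elim0 Fin.elim0

lemma nuclearNorm_vecMulVec_le (a : EuclideanSpace ℝ m) (b : EuclideanSpace ℝ n) :
    nuclearNorm (vecMulVec (WithLp.ofLp a) (WithLp.ofLp b)) ≤ ‖a‖ * ‖b‖ := by
  simpa using nuclearNorm_le_sum_norm_mul_norm (R := 1) (fun _ => a) (fun _ => b)

variable [DecidableEq n]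

lemma frobeniusInner_le_specNorm_mul_nuclearNorm (A M : Matrix m n ℝ) :
    frobeniusInner A M ≤ specNorm A * nuclearNorm M := by
  rw [nuclearNorm, ← smul_eq_mul, ← Real.sInf_smul_of_nonneg (specNorm_nonneg A)]
  obtain ⟨R, a, b, hM⟩ := M.exists_eq_sum_vecMulVec
  refine le_csInf (Set.Nonempty.smul_set ⟨_, R, a, b, hM, rfl⟩) ?_
  rintro _ ⟨_, ⟨R, a, b, rfl, rfl⟩, rfl⟩
  simp only [smul_eq_mul, Finset.mul_sum, ← norm_toLp_eq_sqrt]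
  change frobeniusInner A (∑ r, vecMulVec (a r) (b r)) ≤ _
  rw [frobeniusInner_sum]
  exact Finset.sum_le_sum fun r _ =>
    frobeniusInner_vecMulVec_le A (WithLp.toLp 2 (a r)) (WithLp.toLp 2 (b r))

theorem isLUB_frobeniusInner_nuclearNorm_le_one (A : Matrix m n ℝ) :
    IsLUB {v | ∃ M : Matrix m n ℝ, nuclearNorm M ≤ 1 ∧ v = frobeniusInner A M} (specNorm A) := by
  refine ⟨?_, fun u hu => ?_⟩
  · rintro _ ⟨M, hM, rfl⟩
    calc frobeniusInner A M ≤ specNorm A * nuclearNorm M :=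
          frobeniusInner_le_specNorm_mul_nuclearNorm A M
      _ ≤ specNorm A := mul_le_of_le_one_right (specNorm_nonneg A) hM
  have hu0 : 0 ≤ u := hu ⟨0, by simp [nuclearNorm_zero], (frobeniusInner_zero A).symm⟩
  refine (toEuclideanLin A).toContinuousLinearMap.opNorm_le_bound hu0 fun x => ?_
  set y := toEuclideanLin A x
  change ‖y‖ ≤ u * ‖x‖
  rcases eq_or_ne y 0 with hy | hy
  · rw [hy, norm_zero]
    positivity
  have hx : x ≠ 0 := by rintro rfl; simp [y] at hy
  set c := (‖y‖ * ‖x‖)⁻¹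
  have hc : ‖c • y‖ * ‖x‖ = 1 := by
    rw [norm_smul, Real.norm_of_nonneg (by positivity), mul_assoc, inv_mul_cancel₀ (by positivity)]
  have key := hu ⟨_, (nuclearNorm_vecMulVec_le (c • y) x).trans hc.le, rfl⟩
  rw [frobeniusInner_vecMulVec, real_inner_smul_left, real_inner_self_eq_norm_sq] at key
  calc ‖y‖ = c * ‖y‖ ^ 2 * ‖x‖ := by simp only [c]; field_simp
    _ ≤ u * ‖x‖ := by gcongr

end NuclearNorm

theorem isLUB_sum_frobeniusInner_sum_nuclearNorm_le_one {ι : Type*} [Fintype ι]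
    {m n : ι → Type*} [∀ k, Fintype (m k)] [∀ k, Fintype (n k)] [∀ k, DecidableEq (n k)]
    (B : ∀ k, Matrix (m k) (n k) ℝ) (hι : (Finset.univ : Finset ι).Nonempty) :
    IsLUB {v | ∃ M : ∀ k, Matrix (m k) (n k) ℝ,
        ∑ k, nuclearNorm (M k) ≤ 1 ∧ v = ∑ k, frobeniusInner (B k) (M k)}
      (Finset.univ.sup' hι fun k => specNorm (B k)) := by
  classical
  set t := Finset.univ.sup' hι fun k => specNorm (B k)
  have hle_t : ∀ k, specNorm (B k) ≤ t := fun k =>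
    Finset.le_sup' (fun k => specNorm (B k)) (Finset.mem_univ k)
  refine ⟨?_, fun u hu => Finset.sup'_le _ _ fun k _ => ?_⟩
  · rintro _ ⟨M, hM, rfl⟩
    calc ∑ k, frobeniusInner (B k) (M k)
        ≤ ∑ k, t * nuclearNorm (M k) := Finset.sum_le_sum fun k _ =>
          (frobeniusInner_le_specNorm_mul_nuclearNorm _ _).trans
            (mul_le_mul_of_nonneg_right (hle_t k) (nuclearNorm_nonneg _))
      _ ≤ t := by
        rw [← Finset.mul_sum]
        exact mul_le_of_le_one_right ((specNorm_nonneg _).trans (hle_t hι.choose)) hM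
  refine (isLUB_frobeniusInner_nuclearNorm_le_one (B k)).2 ?_
  rintro _ ⟨N, hN, rfl⟩
  refine hu ⟨Pi.single k N, ?_, ?_⟩
  · rwa [Fintype.sum_eq_single k fun j hj => by simp [hj, nuclearNorm_zero], Pi.single_eq_same]
  · rw [Fintype.sum_eq_single k fun j hj => by simp [hj, frobeniusInner_zero],
      Pi.single_eq_same]

lemma sum_mul_fold {K n : ℕ} (k : Fin K) (Y : (Fin K → Fin n) → ℝ)
    (N : Matrix (Fin n) ({l : Fin K // l ≠ k} → Fin n) ℝ) :
    ∑ idx, Y idx * fold k N idx = frobeniusInner (unfold k Y) N := by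
  have hsplit : ∀ i f, (Equiv.funSplitAt k (Fin n)).symm (i, f) =
      fun l => if h : l = k then i else f ⟨l, h⟩ :=
    fun i f => funext (Equiv.funSplitAt_symm_apply k (Fin n) (i, f))
  rw [← (Equiv.funSplitAt k (Fin n)).symm.sum_comp, Fintype.sum_prod_type, frobeniusInner,
    Matrix.trace, Finset.sum_comm]
  simp [hsplit, unfold, fold, Matrix.mul_apply, fun l : {l // l ≠ k} => l.2]

theorem stmt5_general {K n H : ℕ} (hK : 0 < K)
    (S : ∀ k : Fin K, Matrix ({l : Fin K // l ≠ k} → Fin n) ({l : Fin K // l ≠ k} → Fin H) ℝ)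
    (Y : (Fin K → Fin n) → ℝ) :
    sSup { v : ℝ | ∃ M : ∀ k : Fin K,
            Matrix (Fin n) ({l : Fin K // l ≠ k} → Fin H) ℝ,
          (∑ k, nuclearNorm (M k)) ≤ 1 ∧
          v = ∑ idx, Y idx * (∑ k, fold k (M k * (S k)ᵀ) idx) } =
      Finset.univ.sup' (Finset.univ_nonempty_iff.mpr ⟨⟨0, hK⟩⟩)
        (fun k => specNorm (unfold k Y * S k)) := by
  have hpairing : ∀ M : ∀ k : Fin K, Matrix (Fin n) ({l : Fin K // l ≠ k} → Fin H) ℝ,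
      ∑ idx, Y idx * ∑ k, fold k (M k * (S k)ᵀ) idx =
        ∑ k, frobeniusInner (unfold k Y * S k) (M k) := fun M => by
    simp only [Finset.mul_sum]
    rw [Finset.sum_comm]
    simp only [sum_mul_fold, frobeniusInner_mul_transpose]
  simp only [hpairing]
  have hlub := isLUB_sum_frobeniusInner_sum_nuclearNorm_le_one (fun k => unfold k Y * S k)
    (Finset.univ_nonempty_iff.mpr ⟨⟨0, hK⟩⟩)
  exact hlub.csSup_eq hlub.nonempty

/-- the dual norm of the subspace norm associated with S⁽¹⁾,…,S⁽ᴷ⁾ is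
‖Y‖ₛ* = maxₖ ‖Y₍ₖ₎S⁽ᵏ⁾‖: the supremum of ⟨Y, Σₖ foldₖ(M⁽ᵏ⁾(S⁽ᵏ⁾)ᵀ)⟩ over
Σₖ‖M⁽ᵏ⁾‖* ≤ 1 equals maxₖ of the spectral norm of Y₍ₖ₎S⁽ᵏ⁾. -/
theorem stmt5 {K n H : ℕ} (hK : 0 < K) (hH : H ≤ n)
    (S : ∀ k : Fin K, Matrix ({l : Fin K // l ≠ k} → Fin n) ({l : Fin K // l ≠ k} → Fin H) ℝ)
    (Y : (Fin K → Fin n) → ℝ) :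
    sSup { v : ℝ | ∃ M : ∀ k : Fin K,
            Matrix (Fin n) ({l : Fin K // l ≠ k} → Fin H) ℝ,
          (∑ k, nuclearNorm (M k)) ≤ 1 ∧
          v = ∑ idx, Y idx * (∑ k, fold k (M k * (S k)ᵀ) idx) } =
      Finset.univ.sup' (Finset.univ_nonempty_iff.mpr ⟨⟨0, hK⟩⟩)
        (fun k => specNorm (unfold k Y * S k)) :=
  stmt5_general hK S Y
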